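/- arXiv:math/0701283 — 3 statements merged into one kernel-verified Lean document; each statement's English description precedes it below -/
import Mathlib

section
/- Let A be a finite dimensional k-algebra with complete set of primitive orthogonal idempotents e_1,...,e_n and radical r, with e_i r e_i = 0 for all i. Let f, f' be two unitary derivations of A whose commutator [f, f'] equals the inner derivation δ_e for some e = Σ t_i e_i with t_i ∈ k. Then for any i, j, the restrictions of f and f' to e_j r e_i are linear endomorphisms of e_j r e_i whose commutator equals (t_j − t_i)·Id on e_j r e_i; moreover if both restrictions are diagonalizable, then this commutator is zero. -/
/-!
Orthogonality of the idempotents makes the inner derivation of `∑ t l • e l` act on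
`e j * r * e i` as `(t j - t i) • id`. If `f'` is diagonal in a basis `b`, the coordinate
functional `b.coord l` is a left eigenvector of `f'` with the same eigenvalue as `b l`, so it
kills `⁅f, f'⁆ (b l) = c • b l`, which forces `c = 0`. Unlike the trace argument, this works in
every characteristic.
-/

namespace OrthogonalIdempotents

variable {R A ι : Type*} [CommSemiring R] [Semiring A] [Algebra R A] [Fintype ι]
  {e : ι → A}

theorem sum_smul_mul_mul_left (he : OrthogonalIdempotents e) (t : ι → R) (j : ι) (a : A) :
    (∑ l, t l • e l) * (e j * a) = t j • (e j * a) := by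
  classical
  simp only [Finset.sum_mul, smul_mul_assoc, ← mul_assoc, he.mul_eq,
    smul_ite, smul_zero, Finset.sum_ite_eq', Finset.mem_univ, if_true]

theorem mul_right_mul_sum_smul (he : OrthogonalIdempotents e) (t : ι → R) (i : ι) (a : A) :
    a * e i * (∑ l, t l • e l) = t i • (a * e i) := by
  classical
  simp only [Finset.mul_sum, mul_smul_comm, mul_assoc, he.mul_eq, mul_ite, mul_zero,
    smul_ite, smul_zero, Finset.sum_ite_eq, Finset.mem_univ, if_true]

end OrthogonalIdempotents

theorem OrthogonalIdempotents.sum_smul_lie_mul_mul {R A ι : Type*} [CommRing R] [Ring A]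
    [Algebra R A] [Fintype ι] {e : ι → A} (he : OrthogonalIdempotents e) (t : ι → R)
    (i j : ι) (a : A) :
    ⁅∑ l, t l • e l, e j * a * e i⁆ = (t j - t i) • (e j * a * e i) := by
  rw [Ring.lie_def, mul_assoc (e j), he.sum_smul_mul_mul_left, ← mul_assoc,
    he.mul_right_mul_sum_smul, mul_assoc, sub_smul]

namespace Module.End

variable {k V : Type*} [CommRing k] [AddCommGroup V] [Module k V]

theorem mul_dual_apply_eq_zero_of_lie_eq_smul_one {F G : Module.End k V} {c s : k}
    (hFG : ⁅F, G⁆ = c • 1) {v : V} (hv : G v = s • v) {φ : Module.Dual k V}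
    (hφ : φ ∘ₗ G = s • φ) : c * φ v = 0 := by
  have hφG : ∀ w, φ (G w) = s * φ w := fun w => LinearMap.congr_fun hφ w
  calc c * φ v = φ (⁅F, G⁆ v) := by simp [hFG]
    _ = 0 := by simp [Ring.lie_def, hv, hφG]

theorem coord_comp_eq_smul_of_eigenbasis {ι : Type*} {G : Module.End k V} (b : Basis ι k V)
    {s : ι → k} (hb : ∀ l, G (b l) = s l • b l) (l : ι) :
    b.coord l ∘ₗ G = s l • b.coord l := by
  classical
  refine b.ext fun l' => ?_
  by_cases h : l' = l
  · subst h; simp [hb]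
  · simp [hb, Ne.symm h]

theorem commute_of_lie_eq_smul_one_of_eigenbasis {ι : Type*} {F G : Module.End k V} {c : k}
    (hFG : ⁅F, G⁆ = c • 1) (b : Basis ι k V) (hb : ∀ l, ∃ s : k, G (b l) = s • b l) :
    Commute F G := by
  choose s hs using hb
  have hc : ∀ l, c = 0 := fun l => by
    simpa using mul_dual_apply_eq_zero_of_lie_eq_smul_one hFG (hs l)
      (coord_comp_eq_smul_of_eigenbasis b hs l)
  refine b.ext fun l => ?_
  have h := LinearMap.congr_fun hFG (b l)
  rw [hc l, zero_smul, LinearMap.zero_apply, Ring.lie_def, LinearMap.sub_apply,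
    sub_eq_zero] at h
  exact h

end Module.End

theorem stmt5_general (k : Type*) [Field k] (A : Type*) [Ring A] [Algebra k A]
    (n : ℕ) (e : Fin n → A)
    (horth : ∀ i j, i ≠ j → e i * e j = 0)
    (hidem : ∀ i, IsIdempotentElem (e i))
    (rad : Ideal A)
    (f f' : A →ₗ[k] A)
    (t : Fin n → k)
    (hcomm : ∀ a : A, f (f' a) - f' (f a) = (∑ i, t i • e i) * a - a * (∑ i, t i • e i))
    (W : Fin n → Fin n → Submodule k A)
    (hW : ∀ i j, W i j = Submodule.map
      (LinearMap.mulLeft k (e j) ∘ₗ LinearMap.mulRight k (e i))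
      (Submodule.restrictScalars k rad))
    (hfW : ∀ i j, ∀ x ∈ W i j, f x ∈ W i j)
    (hf'W : ∀ i j, ∀ x ∈ W i j, f' x ∈ W i j) :
    ∀ i j,
      (∀ x ∈ W i j, f (f' x) - f' (f x) = (t j - t i) • x) ∧
      ((∃ (m : ℕ) (b : Module.Basis (Fin m) k (W i j)), ∀ l, ∃ s : k,
          f.restrict (hfW i j) (b l) = s • b l) →
       (∃ (m : ℕ) (b : Module.Basis (Fin m) k (W i j)), ∀ l, ∃ s : k,
          f'.restrict (hf'W i j) (b l) = s • b l) →
       ∀ x ∈ W i j, f (f' x) = f' (f x)) := by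
  intro i j
  have he : OrthogonalIdempotents e := ⟨hidem, fun i j hij => horth i j hij⟩
  have hlie : ∀ x ∈ W i j, f (f' x) - f' (f x) = (t j - t i) • x := by
    intro x hx
    rw [hW] at hx
    obtain ⟨a, -, rfl⟩ := hx
    rw [LinearMap.comp_apply, LinearMap.mulRight_apply, LinearMap.mulLeft_apply, ← mul_assoc,
      hcomm]
    exact he.sum_smul_lie_mul_mul t i j a
  refine ⟨hlie, fun _ ⟨_, b, hb⟩ x hx => ?_⟩
  have hlie' : ⁅f.restrict (hfW i j), f'.restrict (hf'W i j)⁆ = (t j - t i) • 1 :=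
    LinearMap.ext fun v => Subtype.ext (by simpa [Ring.lie_def] using hlie v v.2)
  simpa using congrArg Subtype.val (LinearMap.congr_fun
    (Module.End.commute_of_lie_eq_smul_one_of_eigenbasis hlie' b hb).eq ⟨x, hx⟩)

/-- let `A` be a finite dimensional `k`-algebra with complete set of
primitive orthogonal idempotents `e 1, ..., e n` and radical `r` satisfying
`e i * r * e i = 0` for all `i`. If `f, f'` are unitary derivations whose
commutator is the inner derivation `δ_c` with `c = Σ t i • e i`, then on each
`W i j = e j * r * e i` the commutator of the restrictions of `f` and `f'` is
`(t j − t i) • Id`; moreover, if both restrictions are diagonalizable then this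
commutator is zero. -/
theorem stmt5 (k : Type*) [Field k] (A : Type*) [Ring A] [Algebra k A]
    [FiniteDimensional k A]
    (n : ℕ) (e : Fin n → A)
    (horth : ∀ i j, i ≠ j → e i * e j = 0)
    (hidem : ∀ i, IsIdempotentElem (e i))
    (hcomplete : ∑ i, e i = 1)
    (rad : Ideal A) (hrad : rad = (⊥ : Ideal A).jacobson)
    (hnocycle : ∀ i, ∀ a ∈ rad, e i * a * e i = 0)
    (f f' : A →ₗ[k] A)
    (hderf : ∀ a b : A, f (a * b) = a * f b + f a * b)
    (hderf' : ∀ a b : A, f' (a * b) = a * f' b + f' a * b)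
    (hef : ∀ i, f (e i) = 0) (hef' : ∀ i, f' (e i) = 0)
    (t : Fin n → k)
    (hcomm : ∀ a : A, f (f' a) - f' (f a) = (∑ i, t i • e i) * a - a * (∑ i, t i • e i))
    (W : Fin n → Fin n → Submodule k A)
    (hW : ∀ i j, W i j = Submodule.map
      (LinearMap.mulLeft k (e j) ∘ₗ LinearMap.mulRight k (e i))
      (Submodule.restrictScalars k rad))
    (hfW : ∀ i j, ∀ x ∈ W i j, f x ∈ W i j)
    (hf'W : ∀ i j, ∀ x ∈ W i j, f' x ∈ W i j) :
    ∀ i j,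
      (∀ x ∈ W i j, f (f' x) - f' (f x) = (t j - t i) • x) ∧
      ((∃ (m : ℕ) (b : Module.Basis (Fin m) k (W i j)), ∀ l, ∃ s : k,
          f.restrict (hfW i j) (b l) = s • b l) →
       (∃ (m : ℕ) (b : Module.Basis (Fin m) k (W i j)), ∀ l, ∃ s : k,
          f'.restrict (hf'W i j) (b l) = s • b l) →
       ∀ x ∈ W i j, f (f' x) = f' (f x)) :=
  stmt5_general k A n e horth hidem rad f f' t hcomm W hW hfW hf'W
end

section
/- Let Q be a finite quiver without oriented cycles, I an admissible ideal of kQ, and d : kQ → kQ a linear map such that d(I) ⊆ I and d(u) = t_u·u for some scalar t_u ∈ k for each path u. Fix a total order on the paths of Q and let (r_1,...,r_t) be the (reduced) Gröbner basis of I, i.e. the unique basis of I such that each r_j has leading path u_{i_j} with coefficient 1, each u_{i_j} occurs in no other r_{j'}, and i_1 < ... < i_t. Then d(r_j) ∈ k·r_j for every j. -/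
open Quiver

universe u v

/-- The index set for the path basis of the path algebra `kQ`:
triples `⟨a, b, p⟩` with `p` a path from `a` to `b` in `Q`. -/
abbrev PathIdx (V : Type u) [Quiver.{v + 1} V] : Type (max u (v + 1)) :=
  Σ a b : V, Quiver.Path a b

/-- The underlying vector space of the path algebra `kQ`:
the free `k`-module on the set of paths of `Q`. -/
abbrev PathAlg (k : Type*) [Field k] (V : Type u) [Quiver.{v + 1} V] :=
  PathIdx V →₀ k

open scoped Classical in
/-- The multiplication of the path algebra: bilinear extension of concatenation
of composable paths (and zero on non-composable pairs); the product `mulPA f g`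
concatenates paths of `g` followed by paths of `f` (paths are read right-to-left). -/
noncomputable def mulPA {k : Type*} [Field k] {V : Type u} [Quiver.{v + 1} V]
    (f g : PathAlg k V) : PathAlg k V :=
  f.sum fun p c => g.sum fun q d =>
    if h : q.2.1 = p.1 then
      Finsupp.single ⟨q.1, p.2.1, (q.2.2.cast rfl h).comp p.2.2⟩ (c * d)
    else 0

/-- The trivial path `e x` at a vertex, as an element of the path algebra. -/
noncomputable def ePA (k : Type*) [Field k] {V : Type u} [Quiver.{v + 1} V] (x : V) :
    PathAlg k V :=
  Finsupp.single ⟨x, x, Quiver.Path.nil⟩ 1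

/-- The identity element `Σ_x e x` of the path algebra. -/
noncomputable def onePA (k : Type*) [Field k] (V : Type u) [Quiver.{v + 1} V] [Fintype V] :
    PathAlg k V :=
  ∑ x : V, ePA k x

/-!
Since `d` is diagonal on paths, `g = d (r j) - t (u_{i_j}) • r j` lies in `I` and its coefficient
at each leading path `u_{i_{j'}}` is `(t (u_{i_{j'}}) - t (u_{i_j})) * u_{i_{j'}}*(r j)`, which
vanishes: for `j' = j` the first factor is zero, otherwise the second. An element of
`I = span (r j)` is determined by its coefficients at the leading paths, so `g = 0`.
-/

open Submodule

section

variable {R M ι κ : Type*} [CommRing R] [AddCommGroup M] [Module R M]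

theorem Module.Basis.coord_apply_of_apply_eq_smul (b : Module.Basis κ R M) {d : M →ₗ[R] M}
    {t : κ → R} (hd : ∀ i, d (b i) = t i • b i) (i : κ) (f : M) :
    b.coord i (d f) = t i * b.coord i f := by
  classical
  suffices (b.coord i).comp d = t i • b.coord i from LinearMap.congr_fun this f
  refine b.ext fun l => ?_
  by_cases h : l = i
  · subst h; simp [hd]
  · simp [hd, h]

theorem eq_zero_of_mem_span_of_forall_apply_eq_zero {φ : ι → Module.Dual R M} {r : ι → M}
    (hlead : ∀ j, φ j (r j) = 1) (hred : ∀ j j', j ≠ j' → φ j (r j') = 0) {g : M}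
    (hg : g ∈ span R (Set.range r)) (hφg : ∀ j, φ j g = 0) : g = 0 := by
  obtain ⟨c, rfl⟩ := Finsupp.mem_span_range_iff_exists_finsupp.1 hg
  suffices c = 0 by simp [this]
  ext j
  have hcj : φ j (c.sum fun i a => a • r i) = c j := by
    rw [map_finsuppSum, Finsupp.sum_eq_single j]
    · simp [hlead]
    · intro i _ hij; simp [hred j i (Ne.symm hij)]
    · simp
  simpa [hcj] using hφg j

theorem Module.Basis.map_eq_smul_of_echelon (b : Module.Basis κ R M) {d : M →ₗ[R] M}
    {t : κ → R} (hd : ∀ i, d (b i) = t i • b i) {r : ι → M} {idx : ι → κ}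
    (hlead : ∀ j, b.coord (idx j) (r j) = 1)
    (hred : ∀ j j', j ≠ j' → b.coord (idx j) (r j') = 0)
    (hdr : ∀ j, d (r j) ∈ span R (Set.range r)) (j : ι) :
    d (r j) = t (idx j) • r j := by
  rw [← sub_eq_zero]
  refine eq_zero_of_mem_span_of_forall_apply_eq_zero (φ := fun j => b.coord (idx j)) hlead hred
    (sub_mem (hdr j) (smul_mem _ _ (subset_span ⟨j, rfl⟩))) fun j' => ?_
  rw [map_sub, map_smul, b.coord_apply_of_apply_eq_smul hd, smul_eq_mul, ← sub_mul]
  by_cases h : j' = j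
  · simp [h]
  · simp [hred j' j h]

end

/-- let `Q` be a finite quiver without oriented cycles, `I` an
admissible ideal of `kQ`, and `d : kQ → kQ` a linear map with `d I ⊆ I` which is
diagonal on the path basis (`d u = t u • u` for each path `u`). Fix a total
order on the paths (an enumeration `ord : PathIdx V ≃ Fin N`) and let
`(r 0, ..., r (tlen-1))` be the reduced Gröbner basis of `I` with respect to
this order (characterized by the echelon conditions below). Then
`d (r j) ∈ k • r j` for every `j`. -/
theorem stmt11 (k : Type*) [Field k] (V : Type u) [Quiver.{v + 1} V]
    [Fintype V] [∀ a b : V, Fintype (a ⟶ b)]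
    (hacyclic : ∀ (a : V) (p : Quiver.Path a a), p = Quiver.Path.nil)
    (N : ℕ) (ord : PathIdx V ≃ Fin N)
    (bQ : Module.Basis (Fin N) k (PathAlg k V))
    (hbQ : bQ = (Finsupp.basisSingleOne : Module.Basis (PathIdx V) k (PathAlg k V)).reindex ord)
    (I : Submodule k (PathAlg k V))
    -- `I` is admissible: `I ⊆ (kQ⁺)²` and `(kQ⁺)^N₀ ⊆ I` for some `N₀`
    (hadm1 : ∀ f ∈ I, ∀ p ∈ f.support, 2 ≤ (p : PathIdx V).2.2.length)
    (hadm2 : ∃ N₀ : ℕ, ∀ p : PathIdx V, N₀ ≤ p.2.2.length → Finsupp.single p (1 : k) ∈ I)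
    (d : PathAlg k V →ₗ[k] PathAlg k V)
    (t : PathIdx V → k)
    (hdiag : ∀ p : PathIdx V, d (Finsupp.single p 1) = t p • Finsupp.single p 1)
    (hdI : ∀ f ∈ I, d f ∈ I)
    -- the reduced Gröbner basis `(r j)` of `I`, with leading paths `idx`
    (tlen : ℕ) (r : Fin tlen → PathAlg k V) (idx : Fin tlen → Fin N)
    (hmono : StrictMono idx)
    (hrI : ∀ j, r j ∈ I)
    (hspan : Submodule.span k (Set.range r) = I)
    (hlead : ∀ j, bQ.coord (idx j) (r j) = 1)
    (hech : ∀ j i, idx j < i → bQ.coord i (r j) = 0)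
    (hred : ∀ j j', j ≠ j' → bQ.coord (idx j) (r j') = 0) :
    ∀ j, ∃ c : k, d (r j) = c • r j := by
  have hd : ∀ i, d (bQ i) = t (ord.symm i) • bQ i := by
    subst hbQ
    simp [hdiag]
  have hdr : ∀ j, d (r j) ∈ span k (Set.range r) := fun j => hspan ▸ hdI _ (hrI j)
  exact fun j => ⟨_, bQ.map_eq_smul_of_echelon hd hlead hred hdr j⟩
end

section
/- Let Q be a finite connected quiver without oriented cycles and I an admissible ideal of kQ generated by minimal relations r_1,...,r_t. Then the homotopy relation ∼_I generated by (1) αα⁻¹ ∼ e_y, α⁻¹α ∼ e_x for arrows α : x → y, (2) compatibility with concatenation, and (3) u ∼ v whenever u, v are two paths appearing with nonzero coefficient in a common minimal relation of I, coincides with the relation generated by (1), (2), and (3') u ∼ v whenever u, v appear with nonzero coefficient in some r_i. -/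
open Quiver

universe u v

/-- Walks in `Q` are paths in the double quiver `Symmetrify Q`. Given a set `S`
of pairs of parallel paths of `Q`, `HRel S` is the homotopy relation on walks:
the smallest equivalence relation such that (1) `α α⁻¹ ∼ e` and `α⁻¹ α ∼ e` for
every arrow `α`, (2) it is compatible with concatenation of walks, and (3)
`u ∼ v` for every pair `(u, v) ∈ S`. -/
inductive HRel {V : Type u} [Quiver.{v + 1} V]
    (S : Set (Σ a b : V, Quiver.Path a b × Quiver.Path a b)) :
    ∀ {a b : Quiver.Symmetrify V}, Quiver.Path a b → Quiver.Path a b → Prop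
  | of {a b : V} (uu vv : Quiver.Path a b)
      (h : (⟨a, b, (uu, vv)⟩ : Σ a b : V, Quiver.Path a b × Quiver.Path a b) ∈ S) :
      HRel S (Quiver.Symmetrify.of.mapPath uu) (Quiver.Symmetrify.of.mapPath vv)
  | cancel {a b : Quiver.Symmetrify V} (e : a ⟶ b) :
      HRel S (e.toPath.comp (Quiver.reverse e).toPath) Quiver.Path.nil
  | comp_left {a b c : Quiver.Symmetrify V} {p q : Quiver.Path a b}
      (w : Quiver.Path b c) : HRel S p q → HRel S (p.comp w) (q.comp w)
  | comp_right {a b c : Quiver.Symmetrify V} (w : Quiver.Path c a)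
      {p q : Quiver.Path a b} : HRel S p q → HRel S (w.comp p) (w.comp q)
  | refl {a b : Quiver.Symmetrify V} (p : Quiver.Path a b) : HRel S p p
  | symm {a b : Quiver.Symmetrify V} {p q : Quiver.Path a b} :
      HRel S p q → HRel S q p
  | trans {a b : Quiver.Symmetrify V} {p q r : Quiver.Path a b} :
      HRel S p q → HRel S q r → HRel S p r

/-- The set of pairs of parallel paths appearing (with a nonzero coefficient) in
a common element of a set `T` of elements of the path algebra. -/
def relPairs {k : Type*} [Field k] {V : Type u} [Quiver.{v + 1} V]
    (T : Set (PathAlg k V)) : Set (Σ a b : V, Quiver.Path a b × Quiver.Path a b) :=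
  {x | ∃ f ∈ T, (⟨x.1, x.2.1, x.2.2.1⟩ : PathIdx V) ∈ f.support ∧
    (⟨x.1, x.2.1, x.2.2.2⟩ : PathIdx V) ∈ f.support}

/-- A submodule of the path algebra is a (two-sided) ideal iff it is stable
under left and right multiplication. -/
def IsPathIdeal {k : Type*} [Field k] {V : Type u} [Quiver.{v + 1} V]
    (I : Submodule k (PathAlg k V)) : Prop :=
  ∀ f ∈ I, ∀ g : PathAlg k V, mulPA g f ∈ I ∧ mulPA f g ∈ I

/-- A minimal relation of an ideal `I` of the path algebra: a nonzero element of
`I` no nonempty proper subsum of which lies in `I`. -/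
def IsMinimalRelation {k : Type*} [Field k] {V : Type u} [Quiver.{v + 1} V]
    (I : Submodule k (PathAlg k V)) (f : PathAlg k V) : Prop :=
  f ∈ I ∧ f ≠ 0 ∧ ∀ S : Finset (PathIdx V), S ⊆ f.support → S.Nonempty →
    S ≠ f.support → (∑ p ∈ S, Finsupp.single p (f p)) ∉ I

/-!
Let `S` be the set of pairs of paths occurring together in some `r i`. The elements `f` of `kQ`
whose restriction to every set of paths closed under `S`-homotopy lies in `I` form a two-sided
ideal. It contains every `r i`: the paths of a minimal relation are parallel (multiply by the
idempotents `e x`), so those of `r i` form a single `S`-homotopy class. Hence it contains `I`.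
For a minimal relation `f` of `I`, restricting `f` to the `S`-homotopy class of one of its paths
stays in `I`, so by minimality that class contains the whole support of `f`: the pairs coming
from minimal relations are already `S`-homotopic.
-/

open scoped Classical

section Multiplication

variable {k : Type*} [Field k] {V : Type u} [Quiver.{v + 1} V]

lemma mulPA_single_left (P : PathIdx V) (c : k) (g : PathAlg k V) :
    mulPA (Finsupp.single P c) g =
      g.sum fun q d => if h : q.2.1 = P.1 then
        Finsupp.single ⟨q.1, P.2.1, (q.2.2.cast rfl h).comp P.2.2⟩ (c * d) else 0 :=
  Finsupp.sum_single_index (by simp [Finsupp.sum])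

lemma mulPA_single_right (f : PathAlg k V) (Q : PathIdx V) (c : k) :
    mulPA f (Finsupp.single Q c) =
      f.sum fun p d => if h : Q.2.1 = p.1 then
        Finsupp.single ⟨Q.1, p.2.1, (Q.2.2.cast rfl h).comp p.2.2⟩ (d * c) else 0 :=
  Finsupp.sum_congr fun _ _ => Finsupp.sum_single_index (by split <;> simp)

lemma mulPA_eq_sum_mulPA_single_left (f g : PathAlg k V) :
    mulPA f g = f.sum fun P c => mulPA (Finsupp.single P c) g := by
  simp only [mulPA_single_left]
  rfl

lemma mulPA_eq_sum_mulPA_single_right (f g : PathAlg k V) :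
    mulPA f g = g.sum fun Q c => mulPA f (Finsupp.single Q c) := by
  simp only [mulPA_single_right]
  exact Finsupp.sum_comm ..

lemma mulPA_ePA_right (f : PathAlg k V) (a : V) :
    mulPA f (ePA k a) = f.filter (fun p => p.1 = a) := by
  rw [ePA, mulPA_single_right, Finsupp.filter_eq_sum, Finset.sum_filter]
  refine Finset.sum_congr rfl fun ⟨p₁, p₂, p⟩ _ => ?_
  by_cases h : a = p₁
  · subst h
    simp
  · simp [h, Ne.symm h]

lemma mulPA_ePA_left (b : V) (f : PathAlg k V) :
    mulPA (ePA k b) f = f.filter (fun p => p.2.1 = b) := by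
  rw [ePA, mulPA_single_left, Finsupp.filter_eq_sum, Finset.sum_filter]
  refine Finset.sum_congr rfl fun ⟨q₁, q₂, q⟩ _ => ?_
  by_cases h : q₂ = b
  · subst h
    simp
  · simp [h]

end Multiplication

section MinimalRelation

variable {k : Type*} [Field k] {V : Type u} [Quiver.{v + 1} V]
  {I : Submodule k (PathAlg k V)} {f : PathAlg k V}

lemma IsMinimalRelation.forall_mem_support_of_filter_mem (hf : IsMinimalRelation I f)
    {P : PathIdx V → Prop} (hP : f.filter P ∈ I) {x : PathIdx V} (hx : x ∈ f.support)
    (hPx : P x) : ∀ y ∈ f.support, P y := by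
  by_contra! ⟨y, hy, hPy⟩
  refine hf.2.2 (f.support.filter P) (Finset.filter_subset _ _)
    ⟨x, Finset.mem_filter.2 ⟨hx, hPx⟩⟩ (fun h => hPy ?_) (Finsupp.filter_eq_sum P f ▸ hP)
  exact (Finset.mem_filter.1 (h ▸ hy)).2

lemma IsMinimalRelation.endpoints_eq (hI : IsPathIdeal I) (hf : IsMinimalRelation I f)
    {x y : PathIdx V} (hx : x ∈ f.support) (hy : y ∈ f.support) :
    y.1 = x.1 ∧ y.2.1 = x.2.1 :=
  ⟨hf.forall_mem_support_of_filter_mem (P := fun p => p.1 = x.1)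
      (mulPA_ePA_right f x.1 ▸ (hI f hf.1 _).2) hx rfl y hy,
    hf.forall_mem_support_of_filter_mem (P := fun p => p.2.1 = x.2.1)
      (mulPA_ePA_left x.2.1 f ▸ (hI f hf.1 _).1) hx rfl y hy⟩

end MinimalRelation

section Homotopy

variable {V : Type u} [Quiver.{v + 1} V] {S : Set (Σ a b : V, Path a b × Path a b)}

lemma HRel.of_generators {T : Set (Σ a b : V, Path a b × Path a b)}
    (h : ∀ (a b : V) (u v : Path a b), ⟨a, b, (u, v)⟩ ∈ S →
      HRel T (Symmetrify.of.mapPath u) (Symmetrify.of.mapPath v))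
    {a b : Symmetrify V} {p q : Path a b} (H : HRel S p q) : HRel T p q := by
  induction H with
  | of u v hm => exact h _ _ u v hm
  | cancel e => exact HRel.cancel e
  | comp_left w _ ih => exact HRel.comp_left w ih
  | comp_right w _ ih => exact HRel.comp_right w ih
  | refl p => exact HRel.refl p
  | symm _ ih => exact HRel.symm ih
  | trans _ _ ih₁ ih₂ => exact HRel.trans ih₁ ih₂

variable (S) in
def IsHomotopyClosed (C : Set (PathIdx V)) : Prop :=
  ∀ ⦃a b : V⦄ ⦃u v : Path a b⦄, HRel S (Symmetrify.of.mapPath u) (Symmetrify.of.mapPath v) →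
    (⟨a, b, u⟩ : PathIdx V) ∈ C → (⟨a, b, v⟩ : PathIdx V) ∈ C

variable (S) in
def homotopyClass {a b : V} (u : Path a b) : Set (PathIdx V) :=
  (fun v => (⟨a, b, v⟩ : PathIdx V)) ''
    {v | HRel S (Symmetrify.of.mapPath u) (Symmetrify.of.mapPath v)}

lemma mk_mem_homotopyClass_iff {a b : V} {u v : Path a b} :
    (⟨a, b, v⟩ : PathIdx V) ∈ homotopyClass S u ↔
      HRel S (Symmetrify.of.mapPath u) (Symmetrify.of.mapPath v) :=
  Function.Injective.mem_set_image fun _ _ h => by cases h; rfl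

lemma isHomotopyClosed_homotopyClass {a b : V} (u : Path a b) :
    IsHomotopyClosed S (homotopyClass S u) := by
  rintro a' b' w w' H ⟨v, hv, heq⟩
  cases heq
  exact mk_mem_homotopyClass_iff.2 (hv.trans H)

def compRightPreimage (C : Set (PathIdx V)) (P : PathIdx V) : Set (PathIdx V) :=
  {q | ∃ h : q.2.1 = P.1, (⟨q.1, P.2.1, (q.2.2.cast rfl h).comp P.2.2⟩ : PathIdx V) ∈ C}

def compLeftPreimage (C : Set (PathIdx V)) (Q : PathIdx V) : Set (PathIdx V) :=
  {p | ∃ h : Q.2.1 = p.1, (⟨Q.1, p.2.1, (Q.2.2.cast rfl h).comp p.2.2⟩ : PathIdx V) ∈ C}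

lemma IsHomotopyClosed.compRightPreimage {C : Set (PathIdx V)} (hC : IsHomotopyClosed S C)
    (P : PathIdx V) : IsHomotopyClosed S (compRightPreimage C P) := by
  obtain ⟨p₁, p₂, p⟩ := P
  rintro a b u v H ⟨h, hu⟩
  dsimp only at h hu
  subst h
  refine ⟨rfl, hC ?_ hu⟩
  rw [Prefunctor.mapPath_comp, Prefunctor.mapPath_comp]
  exact H.comp_left _

lemma IsHomotopyClosed.compLeftPreimage {C : Set (PathIdx V)} (hC : IsHomotopyClosed S C)
    (Q : PathIdx V) : IsHomotopyClosed S (compLeftPreimage C Q) := by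
  obtain ⟨q₁, q₂, q⟩ := Q
  rintro a b u v H ⟨h, hu⟩
  dsimp only at h hu
  subst h
  refine ⟨rfl, hC ?_ hu⟩
  rw [Prefunctor.mapPath_comp, Prefunctor.mapPath_comp]
  exact H.comp_right _

end Homotopy

section HomotopyCore

variable {k : Type*} [Field k] {V : Type u} [Quiver.{v + 1} V]

lemma filter_mulPA_single_left (C : Set (PathIdx V)) (P : PathIdx V) (c : k)
    (f : PathAlg k V) :
    (mulPA (Finsupp.single P c) f).filter (· ∈ C) =
      mulPA (Finsupp.single P c) (f.filter (· ∈ compRightPreimage C P)) := by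
  rw [mulPA_single_left, mulPA_single_left, Finsupp.sum, Finsupp.filter_sum,
    Finsupp.sum_filter_index, Finsupp.support_filter, Finset.sum_filter]
  refine Finset.sum_congr rfl fun q _ => ?_
  by_cases h : q.2.1 = P.1
  · by_cases hq : (⟨q.1, P.2.1, (q.2.2.cast rfl h).comp P.2.2⟩ : PathIdx V) ∈ C
    · rw [dif_pos h, if_pos ⟨h, hq⟩, Finsupp.filter_single_of_pos _ hq]
    · rw [dif_pos h, if_neg fun ⟨_, h'⟩ => hq h', Finsupp.filter_single_of_neg _ hq]
  · rw [dif_neg h, if_neg fun ⟨h', _⟩ => h h', Finsupp.filter_zero]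

lemma filter_mulPA_single_right (C : Set (PathIdx V)) (Q : PathIdx V) (c : k)
    (f : PathAlg k V) :
    (mulPA f (Finsupp.single Q c)).filter (· ∈ C) =
      mulPA (f.filter (· ∈ compLeftPreimage C Q)) (Finsupp.single Q c) := by
  rw [mulPA_single_right, mulPA_single_right, Finsupp.sum, Finsupp.filter_sum,
    Finsupp.sum_filter_index, Finsupp.support_filter, Finset.sum_filter]
  refine Finset.sum_congr rfl fun p _ => ?_
  by_cases h : Q.2.1 = p.1
  · by_cases hp : (⟨Q.1, p.2.1, (Q.2.2.cast rfl h).comp p.2.2⟩ : PathIdx V) ∈ C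
    · rw [dif_pos h, if_pos ⟨h, hp⟩, Finsupp.filter_single_of_pos _ hp]
    · rw [dif_pos h, if_neg fun ⟨_, h'⟩ => hp h', Finsupp.filter_single_of_neg _ hp]
  · rw [dif_neg h, if_neg fun ⟨h', _⟩ => h h', Finsupp.filter_zero]

variable (I : Submodule k (PathAlg k V)) (S : Set (Σ a b : V, Path a b × Path a b))

def homotopyCore : Submodule k (PathAlg k V) where
  carrier := {f | ∀ C, IsHomotopyClosed S C → f.filter (· ∈ C) ∈ I}
  add_mem' hf hg C hC := by
    simpa only [Finsupp.filter_add] using I.add_mem (hf C hC) (hg C hC)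
  zero_mem' C _ := by simpa only [Finsupp.filter_zero] using I.zero_mem
  smul_mem' c _ hf C hC := by simpa only [Finsupp.filter_smul] using I.smul_mem c (hf C hC)

variable {I S}

lemma isPathIdeal_homotopyCore (hI : IsPathIdeal I) : IsPathIdeal (homotopyCore I S) := by
  intro f hf g
  constructor
  · intro C hC
    rw [mulPA_eq_sum_mulPA_single_left, Finsupp.sum, Finsupp.filter_sum]
    refine Submodule.sum_mem _ fun P _ => ?_
    rw [filter_mulPA_single_left]
    exact (hI _ (hf _ (hC.compRightPreimage P)) _).1
  · intro C hC
    rw [mulPA_eq_sum_mulPA_single_right, Finsupp.sum, Finsupp.filter_sum]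
    refine Submodule.sum_mem _ fun Q _ => ?_
    rw [filter_mulPA_single_right]
    exact (hI _ (hf _ (hC.compLeftPreimage Q)) _).2

lemma IsMinimalRelation.mem_homotopyCore_relPairs (hI : IsPathIdeal I)
    {T : Set (PathAlg k V)} {f : PathAlg k V} (hf : IsMinimalRelation I f) (hfT : f ∈ T) :
    f ∈ homotopyCore I (relPairs T) := by
  intro C hC
  have support_closed : ∀ x ∈ f.support, x ∈ C → ∀ y ∈ f.support, y ∈ C := by
    rintro ⟨a, b, u⟩ hu huC ⟨a', b', v⟩ hv
    obtain ⟨rfl, rfl⟩ := hf.endpoints_eq hI hu hv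
    exact hC (HRel.of u v ⟨f, hfT, hu, hv⟩) huC
  by_cases hfC : ∃ x ∈ f.support, x ∈ C
  · obtain ⟨x, hx, hxC⟩ := hfC
    rw [(Finsupp.filter_eq_self_iff _ _).2 fun y hy =>
      support_closed x hx hxC y (Finsupp.mem_support_iff.2 hy)]
    exact hf.1
  · rw [(Finsupp.filter_eq_zero_iff _ _).2 fun y hyC =>
      Finsupp.notMem_support_iff.1 fun hy => hfC ⟨y, hy, hyC⟩]
    exact I.zero_mem

lemma IsMinimalRelation.mem_homotopyClass {f : PathAlg k V} (hf : IsMinimalRelation I f)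
    (hfS : f ∈ homotopyCore I S) {a b : V} {u : Path a b} (hu : ⟨a, b, u⟩ ∈ f.support) :
    ∀ y ∈ f.support, y ∈ homotopyClass S u :=
  hf.forall_mem_support_of_filter_mem (hfS _ (isHomotopyClosed_homotopyClass u)) hu
    (mk_mem_homotopyClass_iff.2 (HRel.refl _))

end HomotopyCore

/-- Bardzell–Marcos: let `Q` be a finite connected quiver without
oriented cycles and `I` an admissible ideal of `kQ` generated, as a two-sided
ideal, by minimal relations `r 1, ..., r t`. Then the homotopy relation `∼_I`
(generated by cancellation of inverse arrows, compatibility with concatenation,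
and `u ∼ v` whenever `u, v` appear in a common minimal relation of `I`)
coincides with the relation defined in the same way but using only the pairs of
paths appearing in a common `r i`. -/
theorem stmt19 (k : Type*) [Field k] (V : Type u) [Quiver.{v + 1} V]
    [Fintype V] [∀ a b : V, Fintype (a ⟶ b)]
    (hconn : ∀ a b : Quiver.Symmetrify V, Nonempty (Quiver.Path a b))
    (hacyclic : ∀ (a : V) (p : Quiver.Path a a), p = Quiver.Path.nil)
    (I : Submodule k (PathAlg k V))
    (hideal : IsPathIdeal I)
    -- `I` is admissible: `I ⊆ (kQ⁺)²` and `(kQ⁺)^N₀ ⊆ I` for some `N₀`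
    (hadm1 : ∀ f ∈ I, ∀ p ∈ f.support, 2 ≤ (p : PathIdx V).2.2.length)
    (hadm2 : ∃ N₀ : ℕ, ∀ p : PathIdx V, N₀ ≤ p.2.2.length → Finsupp.single p (1 : k) ∈ I)
    (t : ℕ) (r : Fin t → PathAlg k V)
    (hmin : ∀ i, IsMinimalRelation I (r i))
    -- `I` is generated by the `r i` as a two-sided ideal
    (hgen : ∀ J : Submodule k (PathAlg k V), IsPathIdeal J → (∀ i, r i ∈ J) → I ≤ J) :
    ∀ {a b : Quiver.Symmetrify V} (p q : Quiver.Path a b),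
      HRel (relPairs {f | IsMinimalRelation I f}) p q ↔
      HRel (relPairs (Set.range r)) p q := by
  have hcore : I ≤ homotopyCore I (relPairs (Set.range r)) :=
    hgen _ (isPathIdeal_homotopyCore hideal) fun i =>
      (hmin i).mem_homotopyCore_relPairs hideal ⟨i, rfl⟩
  intro _ _ p q
  refine ⟨HRel.of_generators ?_, HRel.of_generators ?_⟩
  · rintro a b u v ⟨f, hf, hu, hv⟩
    exact mk_mem_homotopyClass_iff.1 (hf.mem_homotopyClass (hcore hf.1) hu _ hv)
  · rintro a b u v ⟨_, ⟨i, rfl⟩, hu, hv⟩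
    exact HRel.of u v ⟨r i, hmin i, hu, hv⟩
end
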